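/- arXiv:2004.09110 — 8 statements merged into one kernel-verified Lean document; each statement's English description precedes it below -/
import Mathlib

section
/- Multiplicative base-change maximality: let 2 ≤ k < ℓ. For any closed term τ built from constants 0, 1, binary addition, and the unary operation x ↦ k·x, with value m, the value of the term obtained by replacing each occurrence of k by ℓ is at most bch(m,k,ℓ). -/
/-- Terms of the multiplicative notation system `M_k`: generated by `0`, `1`,
addition, and multiplication by the base. -/
inductive MTerm : Type
  | zero : MTerm
  | one : MTerm
  | add : MTerm → MTerm → MTerm
  | mulBase : MTerm → MTerm

/-- Value of a multiplicative term at base `k`. -/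
def MTerm.val (k : ℕ) : MTerm → ℕ
  | .zero => 0
  | .one => 1
  | .add s t => s.val k + t.val k
  | .mulBase s => k * s.val k

/-- Norm (number of symbols) of a multiplicative term. -/
def MTerm.norm : MTerm → ℕ
  | .zero => 1
  | .one => 1
  | .add s t => 1 + s.norm + t.norm
  | .mulBase s => 1 + s.norm

/-- Multiplicative base change: replace base `k` by `l` hereditarily in the
base-`k` representation `m = k·p + q`, `0 ≤ q < k`. -/
def mbch (k l m : ℕ) : ℕ :=
  if h : m = 0 ∨ k < 2 then 0
  else l * mbch k l (m / k) + m % k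
termination_by m
decreasing_by
  push_neg at h
  exact Nat.div_lt_self (Nat.pos_of_ne_zero h.1) h.2

lemma mbch_zero (k l : ℕ) : mbch k l 0 = 0 := by rw [mbch]; simp

lemma mbch_eq (k l m : ℕ) (hk : 2 ≤ k) (hm : m ≠ 0) :
    mbch k l m = l * mbch k l (m / k) + m % k := by
  rw [mbch]; rw [dif_neg]; push_neg; exact ⟨hm, by omega⟩

lemma mbch_one (k l : ℕ) (hk : 2 ≤ k) : mbch k l 1 = 1 := by
  rw [mbch_eq k l 1 hk one_ne_zero, Nat.div_eq_of_lt (by omega),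
    Nat.mod_eq_of_lt (by omega), mbch_zero]
  ring

lemma mbch_superadd_aux (k l : ℕ) (hk : 2 ≤ k) (hl : k ≤ l) :
    ∀ n a b, a + b ≤ n → mbch k l a + mbch k l b ≤ mbch k l (a + b) := by
  intro n
  induction n with
  | zero =>
    intro a b hab
    have ha : a = 0 := by omega
    have hb : b = 0 := by omega
    simp [ha, hb, mbch_zero]
  | succ n ih =>
    intro a b hab
    rcases Nat.eq_zero_or_pos a with ha | ha
    · simp [ha, mbch_zero]
    rcases Nat.eq_zero_or_pos b with hb | hb
    · simp [hb, mbch_zero]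
    have hka : a / k < a := Nat.div_lt_self ha (by omega)
    have hkb : b / k < b := Nat.div_lt_self hb (by omega)
    have hak : a % k < k := Nat.mod_lt _ (by omega)
    have hbk : b % k < k := Nat.mod_lt _ (by omega)
    rw [mbch_eq k l a hk (by omega), mbch_eq k l b hk (by omega),
      mbch_eq k l (a + b) hk (by omega), Nat.add_div (by omega : 0 < k),
      Nat.add_mod]
    split_ifs with hc
    · -- carry
      have h1 := ih (a / k) (b / k) (by omega)
      have h2 := ih (a / k + b / k) 1 (by omega)
      rw [mbch_one k l hk] at h2
      have hmod : (a % k + b % k) % k = a % k + b % k - k := by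
        rw [Nat.mod_eq_sub_mod hc, Nat.mod_eq_of_lt (by omega)]
      have h3 : l * mbch k l (a / k) + l * mbch k l (b / k) + l
          ≤ l * mbch k l (a / k + b / k + 1) := by
        calc l * mbch k l (a / k) + l * mbch k l (b / k) + l
            = l * (mbch k l (a / k) + mbch k l (b / k) + 1) := by ring
          _ ≤ l * mbch k l (a / k + b / k + 1) :=
            Nat.mul_le_mul_left l (by omega)
      rw [hmod]
      have : k ≤ a % k + b % k := hc
      zify [this]
      linarith
    · -- no carry
      push_neg at hc
      have h1 := ih (a / k) (b / k) (by omega)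
      have hmod : (a % k + b % k) % k = a % k + b % k :=
        Nat.mod_eq_of_lt (by omega)
      have h3 : l * mbch k l (a / k) + l * mbch k l (b / k)
          ≤ l * mbch k l (a / k + b / k) := by
        calc l * mbch k l (a / k) + l * mbch k l (b / k)
            = l * (mbch k l (a / k) + mbch k l (b / k)) := by ring
          _ ≤ _ := Nat.mul_le_mul_left l h1
      rw [hmod, Nat.add_zero]
      linarith

lemma mbch_superadd (k l a b : ℕ) (hk : 2 ≤ k) (hl : k ≤ l) :
    mbch k l a + mbch k l b ≤ mbch k l (a + b) :=
  mbch_superadd_aux k l hk hl (a + b) a b le_rfl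

lemma mbch_mulBase (k l x : ℕ) (hk : 2 ≤ k) :
    mbch k l (k * x) = l * mbch k l x := by
  rcases Nat.eq_zero_or_pos x with hx | hx
  · simp [hx, mbch_zero]
  · rw [mbch_eq k l (k * x) hk (by positivity),
      Nat.mul_div_cancel_left x (by omega : 0 < k), Nat.mul_mod_right]
    ring

/-- Multiplicative base-change maximality: for `2 ≤ k < ℓ` and any closed term
`τ` of the multiplicative system with value `m` at base `k`, the value of `τ`
with `k` replaced by `ℓ` is at most `bch(m,k,ℓ)`. -/
theorem mterm_base_change_maximality (k l : ℕ) (hk : 2 ≤ k) (hl : k < l)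
    (τ : MTerm) : τ.val l ≤ mbch k l (τ.val k) := by
  induction τ with
  | zero => simp [MTerm.val, mbch_zero]
  | one => simp [MTerm.val, mbch_one k l hk]
  | add s t ihs iht =>
    calc (s.add t).val l = s.val l + t.val l := rfl
      _ ≤ mbch k l (s.val k) + mbch k l (t.val k) := Nat.add_le_add ihs iht
      _ ≤ mbch k l (s.val k + t.val k) := mbch_superadd k l _ _ hk hl.le
      _ = mbch k l ((s.add t).val k) := rfl
  | mulBase s ihs =>
    calc (s.mulBase).val l = l * s.val l := rfl
      _ ≤ l * mbch k l (s.val k) := Nat.mul_le_mul_left l ihs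
      _ = mbch k l (k * s.val k) := (mbch_mulBase k l _ hk).symm
      _ = mbch k l ((s.mulBase).val k) := rfl
end

section
/- Multiplicative norm minimality: define the norm of a term inductively by |0| = |1| = 1, |σ+τ| = 1+|σ|+|τ|, |k·σ| = 1+|σ|. Then for every term τ in the multiplicative system with base k and value m, the norm of the canonical base-k normal form of m is at most the norm of τ. -/
/-- Norm of the base-`k` multiplicative normal form of `m`:
`‖0‖ = 1`, `‖q‖ = 2q - 1` for `0 < q < k`, and `‖k·p + q‖ = ‖p‖ + 2q + 1`
for `p > 0`, `0 ≤ q < k`. -/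
def mnorm (k m : ℕ) : ℕ :=
  if h0 : m = 0 then 1
  else if h1 : k < 2 then 1
  else if h2 : m < k then 2 * m - 1
  else mnorm k (m / k) + 2 * (m % k) + 1
termination_by m
decreasing_by
  exact Nat.div_lt_self (Nat.pos_of_ne_zero h0) (by omega)

lemma mnorm_zero (k : ℕ) : mnorm k 0 = 1 := by rw [mnorm]; simp

lemma mnorm_small (k m : ℕ) (hk : 2 ≤ k) (h0 : 0 < m) (h : m < k) :
    mnorm k m = 2 * m - 1 := by
  rw [mnorm, dif_neg (by omega), dif_neg (by omega), dif_pos h]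

lemma mnorm_big (k m : ℕ) (hk : 2 ≤ k) (h : k ≤ m) :
    mnorm k m = mnorm k (m / k) + 2 * (m % k) + 1 := by
  rw [mnorm, dif_neg (by omega), dif_neg (by omega), dif_neg (by omega)]

lemma divmod_eq (k p r m : ℕ) (hk : 0 < k) (hr : r < k) (h : m = k * p + r) :
    m / k = p ∧ m % k = r := by
  subst h
  rw [Nat.mul_add_div hk, Nat.mul_add_mod, Nat.div_eq_of_lt hr, Nat.mod_eq_of_lt hr]
  exact ⟨rfl, rfl⟩

lemma mnorm_succ (k : ℕ) (hk : 2 ≤ k) : ∀ m, mnorm k (m + 1) ≤ mnorm k m + 2 := by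
  intro m
  induction m using Nat.strong_induction_on with
  | _ m ih =>
  rcases Nat.eq_zero_or_pos m with rfl | hm
  · rw [mnorm_small k 1 hk one_pos (by omega), mnorm_zero]
    omega
  rcases Nat.lt_or_ge (m + 1) k with h | h
  · rw [mnorm_small k (m + 1) hk (by omega) h, mnorm_small k m hk hm (by omega)]
    omega
  · have hk0 : 0 < k := by omega
    have hq : m % k < k := Nat.mod_lt _ hk0
    have hem : m = k * (m / k) + m % k := (Nat.div_add_mod m k).symm
    rcases Nat.lt_or_ge (m % k + 1) k with hc | hc
    · -- no carry
      have key : m + 1 = k * (m / k) + (m % k + 1) := by omega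
      obtain ⟨hd, hr⟩ := divmod_eq k (m / k) (m % k + 1) (m + 1) hk0 hc key
      rw [mnorm_big k (m + 1) hk (by omega), hd, hr]
      have hmk : k ≤ m := by
        rcases Nat.lt_or_ge m k with hx | hx
        · have h1 : m % k = m := Nat.mod_eq_of_lt hx
          omega
        · exact hx
      rw [mnorm_big k m hk hmk]
      omega
    · -- carry : m % k = k - 1
      have key : m + 1 = k * (m / k + 1) + 0 := by rw [Nat.mul_add, Nat.mul_one]; omega
      obtain ⟨hd, hr⟩ := divmod_eq k (m / k + 1) 0 (m + 1) hk0 hk0 key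
      rw [mnorm_big k (m + 1) hk (by omega), hd, hr]
      rcases Nat.lt_or_ge m k with h' | h'
      · have h0 : m / k = 0 := Nat.div_eq_of_lt h'
        have h1 : m % k = m := Nat.mod_eq_of_lt h'
        rw [h0, Nat.zero_add, mnorm_small k 1 hk one_pos (by omega),
          mnorm_small k m hk hm h']
        omega
      · have hd2 : m / k ≤ m / 2 := Nat.div_le_div_left hk (by omega)
        have e3 := ih (m / k) (by omega)
        rw [mnorm_big k m hk h']
        omega

lemma mnorm_add (k : ℕ) (hk : 2 ≤ k) :
    ∀ n a b, a + b = n → mnorm k (a + b) ≤ mnorm k a + mnorm k b + 1 := by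
  intro n
  induction n using Nat.strong_induction_on with
  | _ n ih =>
  intro a b hab
  rcases Nat.eq_zero_or_pos a with rfl | ha
  · rw [Nat.zero_add, mnorm_zero]; omega
  rcases Nat.eq_zero_or_pos b with rfl | hb
  · rw [Nat.add_zero, mnorm_zero]; omega
  rcases Nat.lt_or_ge (a + b) k with h | h
  · rw [mnorm_small k (a + b) hk (by omega) h,
      mnorm_small k a hk ha (by omega), mnorm_small k b hk hb (by omega)]
    omega
  · have hk0 : 0 < k := by omega
    have hqa : a % k < k := Nat.mod_lt _ hk0
    have hqb : b % k < k := Nat.mod_lt _ hk0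
    have hea : a = k * (a / k) + a % k := (Nat.div_add_mod a k).symm
    have heb : b = k * (b / k) + b % k := (Nat.div_add_mod b k).symm
    have hda2 : a / k ≤ a / 2 := Nat.div_le_div_left hk (by omega)
    have hdb2 : b / k ≤ b / 2 := Nat.div_le_div_left hk (by omega)
    have key : a + b = k * (a / k + b / k) + (a % k + b % k) := by
      rw [Nat.mul_add]; omega
    have hA : (a / k = 0 ∧ a % k = a ∧ mnorm k a = 2 * a - 1) ∨
        (1 ≤ a / k ∧ mnorm k a = mnorm k (a / k) + 2 * (a % k) + 1) := by
      rcases Nat.lt_or_ge a k with h' | h'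
      · exact Or.inl ⟨Nat.div_eq_of_lt h', Nat.mod_eq_of_lt h', mnorm_small k a hk ha h'⟩
      · exact Or.inr ⟨Nat.div_pos h' hk0, mnorm_big k a hk h'⟩
    have hB : (b / k = 0 ∧ b % k = b ∧ mnorm k b = 2 * b - 1) ∨
        (1 ≤ b / k ∧ mnorm k b = mnorm k (b / k) + 2 * (b % k) + 1) := by
      rcases Nat.lt_or_ge b k with h' | h'
      · exact Or.inl ⟨Nat.div_eq_of_lt h', Nat.mod_eq_of_lt h', mnorm_small k b hk hb h'⟩
      · exact Or.inr ⟨Nat.div_pos h' hk0, mnorm_big k b hk h'⟩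
    rcases Nat.lt_or_ge (a % k + b % k) k with hc | hc
    · -- no carry
      obtain ⟨hd, hr⟩ := divmod_eq k (a / k + b / k) (a % k + b % k) (a + b) hk0 hc key
      rw [mnorm_big k (a + b) hk h, hd, hr]
      rcases hA with ⟨ha0, ha1, ha2⟩ | ⟨ha0, ha2⟩ <;>
        rcases hB with ⟨hb0, hb1, hb2⟩ | ⟨hb0, hb2⟩
      · omega
      · simp only [ha0, Nat.zero_add]
        omega
      · simp only [hb0, Nat.add_zero]
        omega
      · have ihpp : mnorm k (a / k + b / k) ≤ mnorm k (a / k) + mnorm k (b / k) + 1 :=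
          ih (a / k + b / k) (by omega) (a / k) (b / k) rfl
        omega
    · -- carry
      have key2 : a + b = k * (a / k + b / k + 1) + (a % k + b % k - k) := by
        rw [Nat.mul_add, Nat.mul_one]; omega
      obtain ⟨hd, hr⟩ := divmod_eq k (a / k + b / k + 1) (a % k + b % k - k)
        (a + b) hk0 (by omega) key2
      rw [mnorm_big k (a + b) hk h, hd, hr]
      rcases hA with ⟨ha0, ha1, ha2⟩ | ⟨ha0, ha2⟩ <;>
        rcases hB with ⟨hb0, hb1, hb2⟩ | ⟨hb0, hb2⟩
      · simp only [ha0, hb0, Nat.zero_add]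
        rw [mnorm_small k 1 hk one_pos (by omega)]
        omega
      · simp only [ha0, Nat.zero_add]
        have hs := mnorm_succ k hk (b / k)
        omega
      · simp only [hb0, Nat.add_zero]
        have hs := mnorm_succ k hk (a / k)
        omega
      · have ihpp : mnorm k (a / k + b / k) ≤ mnorm k (a / k) + mnorm k (b / k) + 1 :=
          ih (a / k + b / k) (by omega) (a / k) (b / k) rfl
        have hs := mnorm_succ k hk (a / k + b / k)
        omega

lemma mnorm_mul (k m : ℕ) (hk : 2 ≤ k) : mnorm k (k * m) ≤ mnorm k m + 1 := by
  rcases Nat.eq_zero_or_pos m with rfl | hm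
  · rw [Nat.mul_zero, mnorm_zero]; omega
  · have h : k ≤ k * m := Nat.le_mul_of_pos_right k hm
    obtain ⟨hd, hr⟩ := divmod_eq k m 0 (k * m) (by omega) (by omega) (by ring)
    rw [mnorm_big k (k * m) hk h, hd, hr]

/-- Multiplicative norm minimality: for every term `τ` of the multiplicative
system at base `k ≥ 2`, the norm of the canonical base-`k` normal form of the
value of `τ` is at most the norm of `τ`. -/
theorem mterm_norm_minimality (k : ℕ) (hk : 2 ≤ k) (τ : MTerm) :
    mnorm k (τ.val k) ≤ τ.norm := by
  induction τ with
  | zero => simp [MTerm.val, MTerm.norm, mnorm_zero]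
  | one =>
    simp only [MTerm.val, MTerm.norm]
    rw [mnorm_small k 1 hk one_pos (by omega)]
  | add s t ihs iht =>
    simp only [MTerm.val, MTerm.norm]
    calc mnorm k (s.val k + t.val k) ≤ mnorm k (s.val k) + mnorm k (t.val k) + 1 :=
          mnorm_add k hk _ _ _ rfl
      _ ≤ 1 + s.norm + t.norm := by omega
  | mulBase s ihs =>
    simp only [MTerm.val, MTerm.norm]
    calc mnorm k (k * s.val k) ≤ mnorm k (s.val k) + 1 := mnorm_mul k _ hk
      _ ≤ 1 + s.norm := by omega
end

section
/- Stability of the ordinal assignment under base change: for 2 ≤ k < ℓ and any natural number m, mapping m first via base change from k to ℓ and then to its polynomial ψ_ℓ(bch(m,k,ℓ)) ∈ ℕ[ω] gives the same polynomial as ψ_k(m). -/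
open Polynomial in
/-- The ordinal (polynomial) assignment: `ψ_k 0 = 0` and
`ψ_k (k·p + q) = ω·ψ_k p + q` for `0 ≤ q < k`, with `ω` a polynomial variable. -/
noncomputable def psi (k m : ℕ) : Polynomial ℕ :=
  if h : m = 0 ∨ k < 2 then 0
  else Polynomial.X * psi k (m / k) + Polynomial.C (m % k)
termination_by m
decreasing_by
  push_neg at h
  exact Nat.div_lt_self (Nat.pos_of_ne_zero h.1) h.2

lemma psi_mul_add (l p q : ℕ) (hl : 2 ≤ l) (hq : q < l) :
    psi l (l * p + q) = Polynomial.X * psi l p + Polynomial.C q := by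
  by_cases h0 : l * p + q = 0
  · obtain ⟨h1, h2⟩ := Nat.add_eq_zero.mp h0
    have hp : p = 0 := by
      rcases Nat.mul_eq_zero.mp h1 with h | h
      · omega
      · exact h
    subst hp h2
    simp [psi]
  · rw [psi]
    rw [dif_neg (by push_neg; exact ⟨h0, by omega⟩)]
    have hl0 : 0 < l := by omega
    rw [Nat.mul_add_div hl0, Nat.mul_add_mod, Nat.div_eq_of_lt hq, Nat.mod_eq_of_lt hq,
      Nat.add_zero]

/-- Stability of the ordinal assignment under base change: for `2 ≤ k < ℓ`,
`ψ_ℓ(bch(m,k,ℓ)) = ψ_k(m)`. -/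
theorem psi_base_change_stable (k l m : ℕ) (hk : 2 ≤ k) (hl : k < l) :
    psi l (mbch k l m) = psi k m := by
  induction m using Nat.strong_induction_on with
  | _ m ih =>
    by_cases h0 : m = 0
    · subst h0; simp [mbch, psi]
    · rw [mbch, dif_neg (by push_neg; exact ⟨h0, by omega⟩)]
      rw [psi_mul_add l _ _ (by omega) (by have := Nat.mod_lt m (show 0 < k by omega); omega)]
      rw [ih (m / k) (Nat.div_lt_self (Nat.pos_of_ne_zero h0) (by omega))]
      conv_rhs => rw [psi, dif_neg (by push_neg; exact ⟨h0, by omega⟩)]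
end

section
/- Ackermannian lower bound for the multiplicative Goodstein process: let m ∈ ℕ and let i* be least with G_{i*}(m) = 0 (the multiplicative Goodstein process starting at m). Then for all k with 1 ≤ k ≤ i*, F_{G_k(m), k+2}(k) ≤ i*, where F is the function assignment defined in the context. -/
/-- The multiplicative Goodstein sequence starting at `m`:
`G_0 = m` and `G_(i+1) = bch(G_i, i+2, i+3) - 1` (truncated subtraction). -/
def Gm (m : ℕ) : ℕ → ℕ
  | 0 => m
  | i + 1 => mbch (i + 2) (i + 3) (Gm m i) - 1

/-- The Ackermann hierarchy over the successor function:
`A_0 b = b + 1`, `A_(a+1) 0 = A_a 1`, `A_(a+1) (b+1) = A_a (A_(a+1) b)`. -/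
def Ack : ℕ → ℕ → ℕ
  | 0, b => b + 1
  | a + 1, 0 => Ack a 1
  | a + 1, b + 1 => Ack a (Ack (a + 1) b)

/-- The function assignment `F`: `F_(0,k) = id` and, for `m = a + k^r` with `r`
maximal such that `k^r ∣ m`, `F_(m,k) = F_(a,k) ∘ A_r`. -/
def Fm (k m x : ℕ) : ℕ :=
  if h : m = 0 then x
  else
    Fm k (m - k ^ Nat.findGreatest (fun r => k ^ r ∣ m) m)
      (Ack (Nat.findGreatest (fun r => k ^ r ∣ m) m) x)
termination_by m
decreasing_by
  have hr : k ^ Nat.findGreatest (fun r => k ^ r ∣ m) m ∣ m :=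
    Nat.findGreatest_spec (P := fun r => k ^ r ∣ m) (Nat.zero_le m) (by simp)
  refine Nat.sub_lt (Nat.pos_of_ne_zero h) (Nat.pos_of_ne_zero fun h0 => ?_)
  exact h (Nat.eq_zero_of_zero_dvd (h0 ▸ hr))

theorem Ack_eq_ack : Ack = ack := by
  funext a b
  induction a generalizing b with
  | zero => rw [Ack, ack_zero]
  | succ a iha =>
    induction b with
    | zero => rw [Ack, ack_succ_zero, iha]
    | succ b ihb => rw [Ack, ack_succ_succ, iha, ihb]

theorem ack_succ_eq_iterate (a x : ℕ) : ack (a + 1) x = (ack a)^[x + 1] 1 := by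
  induction x with
  | zero => simp [ack_succ_zero]
  | succ x ih => rw [ack_succ_succ, ih, ← Function.iterate_succ_apply' (ack a)]

theorem ack_succ_le_iterate (a : ℕ) {x c : ℕ} (h : x + 2 ≤ c) :
    ack (a + 1) x ≤ (ack a)^[c] x := by
  have id_le : id ≤ ack a := fun y => (lt_ack_right a y).le
  calc ack (a + 1) x = (ack a)^[x + 1] 1 := ack_succ_eq_iterate a x
    _ ≤ (ack a)^[x + 1] (ack a x) := (ack_mono_right a).iterate _ (ack_pos a x)
    _ = (ack a)^[x + 2] x := (Function.iterate_succ_apply _ _ _).symm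
    _ ≤ (ack a)^[c] x := Function.monotone_iterate_of_id_le id_le h x

/-- `ackOfDigits i [d₀, d₁, …, dₙ] = A_{i+n}^{dₙ} ∘ ⋯ ∘ A_{i+1}^{d₁} ∘ A_i^{d₀}`, so that
`F_{m,k} = ackOfDigits 0 (Nat.digits k m)`. -/
def ackOfDigits : ℕ → List ℕ → ℕ → ℕ
  | _, [], x => x
  | i, d :: L, x => ackOfDigits (i + 1) L ((ack i)^[d] x)

@[simp]
theorem ackOfDigits_nil (i x : ℕ) : ackOfDigits i [] x = x := rfl

@[simp]
theorem ackOfDigits_cons (i d : ℕ) (L : List ℕ) (x : ℕ) :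
    ackOfDigits i (d :: L) x = ackOfDigits (i + 1) L ((ack i)^[d] x) := rfl

theorem ackOfDigits_mono (i : ℕ) (L : List ℕ) : Monotone (ackOfDigits i L) := by
  induction L generalizing i with
  | nil => exact monotone_id
  | cons d L ih => exact (ih (i + 1)).comp ((ack_mono_right i).iterate d)

section Digits

variable {c : ℕ}

theorem ackOfDigits_digits_add_base_mul (hc : 1 < c) {d : ℕ} (hd : d < c) (q i x : ℕ) :
    ackOfDigits i (c.digits (d + c * q)) x =
      ackOfDigits (i + 1) (c.digits q) ((ack i)^[d] x) := by
  rcases eq_or_ne d 0 with rfl | hd0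
  · rcases eq_or_ne q 0 with rfl | hq0
    · simp
    · rw [Nat.digits_add c hc 0 q hd (Or.inr hq0), ackOfDigits_cons]
  · rw [Nat.digits_add c hc d q hd (Or.inl hd0), ackOfDigits_cons]

theorem ackOfDigits_digits_pow_mul (hc : 1 < c) (r n i x : ℕ) :
    ackOfDigits i (c.digits (c ^ r * n)) x = ackOfDigits (i + r) (c.digits n) x := by
  induction r generalizing i with
  | zero => simp
  | succ r ih =>
    have h := ackOfDigits_digits_add_base_mul hc (by omega : 0 < c) (c ^ r * n) i x
    rw [zero_add, ← mul_assoc, ← pow_succ'] at h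
    rw [h, Function.iterate_zero_apply, ih, add_assoc, add_comm 1 r]

theorem ackOfDigits_digits_of_not_dvd (hc : 1 < c) {n : ℕ} (hn : ¬ c ∣ n) (i x : ℕ) :
    ackOfDigits i (c.digits n) x = ackOfDigits i (c.digits (n - 1)) (ack i x) := by
  obtain ⟨d, hd⟩ : ∃ d, n % c = d + 1 :=
    Nat.exists_eq_add_one.mpr (Nat.pos_of_ne_zero fun h => hn (Nat.dvd_of_mod_eq_zero h))
  have hdc : d + 1 < c := hd ▸ Nat.mod_lt n (by omega)
  have hn_eq : n = (d + 1) + c * (n / c) := by rw [← hd, Nat.mod_add_div]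
  have hpred : n - 1 = d + c * (n / c) := by omega
  conv_lhs => rw [hn_eq]
  rw [hpred, ackOfDigits_digits_add_base_mul hc hdc,
    ackOfDigits_digits_add_base_mul hc (by omega), Function.iterate_succ_apply]

theorem ackOfDigits_digits_le_pred {x : ℕ} (hx : x + 2 ≤ c) (n i : ℕ) :
    ackOfDigits i (c.digits n) x ≤ ackOfDigits i (c.digits (n - 1)) (ack i x) := by
  have hc : 1 < c := by omega
  induction n using Nat.strong_induction_on generalizing i with
  | _ n ih =>
    rcases eq_or_ne n 0 with rfl | hn0
    · simpa using (lt_ack_right i x).le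
    by_cases hdvd : c ∣ n
    · obtain ⟨q, rfl⟩ := hdvd
      have hq : q ≠ 0 := by rintro rfl; simp at hn0
      have hpred : c * q - 1 = (c - 1) + c * (q - 1) := by
        have : c ≤ c * q := Nat.le_mul_of_pos_right c (Nat.pos_of_ne_zero hq)
        rw [Nat.mul_sub_one]; omega
      calc ackOfDigits i (c.digits (c * q)) x
          = ackOfDigits (i + 1) (c.digits q) x := by
            simpa using ackOfDigits_digits_add_base_mul hc (by omega : 0 < c) q i x
        _ ≤ ackOfDigits (i + 1) (c.digits (q - 1)) (ack (i + 1) x) :=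
            ih q (lt_mul_left (Nat.pos_of_ne_zero hq) hc) (i + 1)
        _ ≤ ackOfDigits (i + 1) (c.digits (q - 1)) ((ack i)^[c - 1] (ack i x)) := by
            apply ackOfDigits_mono
            rw [← Function.iterate_succ_apply, Nat.succ_eq_add_one, Nat.sub_add_cancel hc.le]
            exact ack_succ_le_iterate i hx
        _ = ackOfDigits i (c.digits (c * q - 1)) (ack i x) := by
            rw [hpred, ackOfDigits_digits_add_base_mul hc (by omega)]
    · exact (ackOfDigits_digits_of_not_dvd hc hdvd i x).le

end Digits

section Fm

variable {b : ℕ}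

theorem Fm_zero (x : ℕ) : Fm b 0 x = x := by
  rw [Fm, dif_pos rfl]

theorem findGreatest_pow_dvd_pow_mul (hb : 1 < b) {r q : ℕ} (hq : ¬ b ∣ q) :
    Nat.findGreatest (fun s => b ^ s ∣ b ^ r * q) (b ^ r * q) = r := by
  have hq0 : q ≠ 0 := by rintro rfl; exact hq (dvd_zero b)
  refine Nat.findGreatest_eq_iff.mpr ⟨?_, fun _ => dvd_mul_right _ _, fun s hrs _ hs => hq ?_⟩
  · exact (Nat.lt_pow_self hb).le.trans (Nat.le_mul_of_pos_right _ (Nat.pos_of_ne_zero hq0))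
  · have : b ^ r * b ∣ b ^ r * q := (pow_succ b r ▸ Nat.pow_dvd_pow b hrs).trans hs
    exact Nat.dvd_of_mul_dvd_mul_left (pow_pos (by omega) r) this

theorem Fm_pow_mul (hb : 1 < b) {r q : ℕ} (hq : ¬ b ∣ q) (x : ℕ) :
    Fm b (b ^ r * q) x = Fm b (b ^ r * (q - 1)) (Ack r x) := by
  have hq0 : q ≠ 0 := by rintro rfl; exact hq (dvd_zero b)
  rw [Fm, dif_neg (mul_ne_zero (pow_ne_zero r (by omega)) hq0),
    findGreatest_pow_dvd_pow_mul hb hq, Nat.mul_sub_one]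

theorem Fm_eq_ackOfDigits (hb : 1 < b) (m x : ℕ) : Fm b m x = ackOfDigits 0 (b.digits m) x := by
  induction m using Nat.strong_induction_on generalizing x with
  | _ m ih =>
    rcases eq_or_ne m 0 with rfl | hm
    · simp [Fm_zero]
    obtain ⟨r, q, hq, rfl⟩ := Nat.exists_eq_pow_mul_and_not_dvd hm b hb.ne'
    have hq0 : q ≠ 0 := by rintro rfl; exact hq (dvd_zero b)
    have hlt : b ^ r * (q - 1) < b ^ r * q :=
      Nat.mul_lt_mul_of_pos_left (by omega) (pow_pos (by omega) r)
    rw [Fm_pow_mul hb hq, ih _ hlt, ackOfDigits_digits_pow_mul hb, ackOfDigits_digits_pow_mul hb,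
      ackOfDigits_digits_of_not_dvd hb hq, zero_add, Ack_eq_ack]

theorem mbch_eq_ofDigits (hb : 1 < b) (l m : ℕ) : mbch b l m = Nat.ofDigits l (b.digits m) := by
  induction m using Nat.strong_induction_on with
  | _ m ih =>
    rcases eq_or_ne m 0 with rfl | hm
    · simp [mbch]
    rw [mbch, dif_neg (by omega), Nat.digits_def' hb (Nat.pos_of_ne_zero hm), Nat.ofDigits_cons,
      ih _ (Nat.div_lt_self (Nat.pos_of_ne_zero hm) hb)]
    ring

theorem digits_succ_mbch (hb : 1 < b) (m : ℕ) :
    (b + 1).digits (mbch b (b + 1) m) = b.digits m := by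
  rw [mbch_eq_ofDigits hb]
  refine Nat.digits_ofDigits _ (by omega) _ (fun d hd => ?_) (fun h => ?_)
  · exact (Nat.digits_lt_base hb hd).trans (Nat.lt_succ_self b)
  · exact Nat.getLast_digit_ne_zero _ (Nat.digits_ne_nil_iff_ne_zero.mp h)

theorem Fm_le_Fm_mbch_sub_one (hb : 1 < b) {x : ℕ} (hx : x + 1 ≤ b) (m : ℕ) :
    Fm b m x ≤ Fm (b + 1) (mbch b (b + 1) m - 1) (x + 1) := by
  rw [Fm_eq_ackOfDigits hb, Fm_eq_ackOfDigits (by omega), ← digits_succ_mbch hb m, ← ack_zero x]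
  exact ackOfDigits_digits_le_pred (c := b + 1) (by omega) _ 0

end Fm

theorem Fm_Gm_monotone (m : ℕ) : Monotone fun j => Fm (j + 2) (Gm m j) j :=
  monotone_nat_of_le_succ fun j =>
    Fm_le_Fm_mbch_sub_one (b := j + 2) (by omega) (by omega) (Gm m j)

theorem multiplicative_goodstein_lower_bound_general (m istar : ℕ)
    (h0 : Gm m istar = 0)
    (k : ℕ) (hk2 : k ≤ istar) :
    Fm (k + 2) (Gm m k) k ≤ istar := by
  simpa [h0, Fm_zero] using Fm_Gm_monotone m hk2

/-- Ackermannian lower bound for the multiplicative Goodstein process: if `i*`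
is least with `G_(i*)(m) = 0`, then for all `1 ≤ k ≤ i*` we have
`F_(G_k(m), k+2)(k) ≤ i*`. -/
theorem multiplicative_goodstein_lower_bound (m istar : ℕ)
    (h0 : Gm m istar = 0) (hmin : ∀ j, j < istar → Gm m j ≠ 0)
    (k : ℕ) (hk1 : 1 ≤ k) (hk2 : k ≤ istar) :
    Fm (k + 2) (Gm m k) k ≤ istar :=
  multiplicative_goodstein_lower_bound_general m istar h0 k hk2
end

section
/- Norm subadditivity for exponential normal forms: for k ≥ 2, ‖m+1‖_k ≤ ‖m‖_k + 3, where ‖m‖_k is the number of symbols in the hereditary base-k representation (counting 0 as one symbol, and each + and each k^(·) as one symbol). -/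
/-- Norm of the hereditary base-`k` exponential normal form of `m`:
`‖0‖ = 1` and `‖k^r + b‖ = ‖r‖ + ‖b‖ + 2` where `k^r ≤ m < k^(r+1)`. -/
def enorm (k m : ℕ) : ℕ :=
  if h : m = 0 ∨ k < 2 then 1
  else enorm k (Nat.log k m) + enorm k (m - k ^ Nat.log k m) + 2
termination_by m
decreasing_by
  · push_neg at h
    exact Nat.log_lt_self k h.1
  · push_neg at h
    exact Nat.sub_lt (Nat.pos_of_ne_zero h.1) (pow_pos (by omega) _)

/-!
Induct on `m = k^r + b`. If `m + 1 < k^(r+1)`, only the tail changes, `b ↦ b + 1`, and induction on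
`b` applies. Otherwise `m + 1 = k^(r+1)` has normal form `k^(r+1) + 0`; induction on the exponent
gives `‖r+1‖ ≤ ‖r‖ + 3`, and the lost tail `b` had norm at least `1 = ‖0‖`.
-/

namespace HereditaryBase

variable {k : ℕ}

theorem enorm_zero (k : ℕ) : enorm k 0 = 1 := by
  rw [enorm.eq_1]; simp

theorem one_le_enorm (k m : ℕ) : 1 ≤ enorm k m := by
  rw [enorm.eq_1]; split <;> omega

theorem enorm_pow_add (hk : 2 ≤ k) {r b : ℕ} (hb : k ^ r + b < k ^ (r + 1)) :
    enorm k (k ^ r + b) = enorm k r + enorm k b + 2 := by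
  have hlog : Nat.log k (k ^ r + b) = r :=
    Nat.log_eq_of_pow_le_of_lt_pow (Nat.le_add_right _ _) hb
  have hpos : k ^ r ≠ 0 := pow_ne_zero _ (by omega)
  rw [enorm.eq_1, dif_neg (by omega), hlog, Nat.add_sub_cancel_left]

theorem enorm_pow (hk : 2 ≤ k) (r : ℕ) : enorm k (k ^ r) = enorm k r + 3 := by
  have hlt : k ^ r < k ^ (r + 1) := Nat.pow_lt_pow_right hk (Nat.lt_succ_self r)
  rw [← add_zero (k ^ r), enorm_pow_add hk (by simpa using hlt), enorm_zero]

theorem exists_eq_pow_add_of_ne_zero (hk : 2 ≤ k) {m : ℕ} (hm : m ≠ 0) :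
    ∃ r b, m = k ^ r + b ∧ k ^ r + b < k ^ (r + 1) := by
  refine ⟨Nat.log k m, m - k ^ Nat.log k m, ?_, ?_⟩ <;>
    rw [Nat.add_sub_cancel' (Nat.pow_log_le_self k hm)]
  exact Nat.lt_pow_succ_log_self (by omega) m

end HereditaryBase

open HereditaryBase

/-- Norm subadditivity for exponential normal forms: `‖m+1‖_k ≤ ‖m‖_k + 3`. -/
theorem enorm_succ_le (k m : ℕ) (hk : 2 ≤ k) :
    enorm k (m + 1) ≤ enorm k m + 3 := by
  induction m using Nat.strong_induction_on with
  | _ m ih =>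
    rcases eq_or_ne m 0 with rfl | hm
    · simpa [enorm_zero] using (enorm_pow hk 0).le
    obtain ⟨r, b, rfl, hb⟩ := exists_eq_pow_add_of_ne_zero hk hm
    rw [enorm_pow_add hk hb]
    rcases (show k ^ r + b + 1 ≤ k ^ (r + 1) from hb).lt_or_eq with hb' | hb'
    · have ih_tail := ih b (by have := Nat.one_le_pow r k (by omega); omega)
      rw [add_assoc, enorm_pow_add hk (by rwa [← add_assoc])]
      omega
    · have ih_exp := ih r ((Nat.lt_pow_self hk).trans_le (Nat.le_add_right _ _))
      have := one_le_enorm k b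
      rw [hb', enorm_pow hk]
      omega
end

section
/- Exponential norm minimality lemma: if m = k^a + b (with a, b arbitrary natural numbers, not necessarily giving a normal form decomposition), then ‖m‖_k ≤ ‖a‖_k + ‖b‖_k + 2. -/
/-!
Induction on `b`. If adding `k^a` does not push `k^a + b` past `k^(a+1)`, then `k^a` is the leading
term of `k^a + b` and equality holds. If `b ≥ k^(a+1)`, the leading term `k^s` of `b` is also that
of `k^a + b`, and two applications of the induction hypothesis, to `k^s + (k^a + c)` and to `k^a + c`
where `b = k^s + c`, give the bound. In the remaining carry case `b = (k-1) k^a + d` with `d < k^a`,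
so `k^a + b = k^(a+1) + d`; the digit `k - 1` contributes `(k-1)(‖a‖+2)` to `‖b‖`, which pays for
`‖a+1‖ ≤ ‖a‖ + 3`, itself the instance `k^0 + a` of the induction hypothesis.
-/

lemma one_le_enorm (k m : ℕ) : 1 ≤ enorm k m := by
  rw [_root_.enorm]; split <;> omega

lemma enorm_zero_eq_one (k : ℕ) : enorm k 0 = 1 := by
  simp [_root_.enorm]

lemma enorm_pow_add_of_lt {k r d : ℕ} (hk : 2 ≤ k) (h : k ^ r + d < k ^ (r + 1)) :
    enorm k (k ^ r + d) = enorm k r + enorm k d + 2 := by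
  have hpos : 0 < k ^ r := pow_pos (by omega) r
  rw [_root_.enorm, dif_neg (by omega), Nat.log_eq_of_pow_le_of_lt_pow (Nat.le_add_right _ _) h,
    Nat.add_sub_cancel_left]

lemma enorm_mul_pow_add {k a d : ℕ} (hk : 2 ≤ k) (hd : d < k ^ a) {j : ℕ} (hj : j < k) :
    enorm k (j * k ^ a + d) = j * (enorm k a + 2) + enorm k d := by
  induction j with
  | zero => simp
  | succ j ih =>
    have hdigit : (j + 2) * k ^ a ≤ k * k ^ a := Nat.mul_le_mul_right _ hj
    have hlt : k ^ a + (j * k ^ a + d) < k ^ (a + 1) := by rw [pow_succ']; nlinarith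
    rw [add_one_mul, add_comm (j * k ^ a), add_assoc, enorm_pow_add_of_lt hk hlt, ih (by omega)]
    ring

section InductionStep

variable {k a b : ℕ}

lemma enorm_pow_add_le_of_carry (hk : 2 ≤ k) (hcarry : k ^ (a + 1) ≤ k ^ a + b)
    (hb : b < k ^ (a + 1))
    (ih : ∀ c < b, ∀ a, enorm k (k ^ a + c) ≤ enorm k a + enorm k c + 2) :
    enorm k (k ^ a + b) ≤ enorm k a + enorm k b + 2 := by
  have hka : k ^ (a + 1) = (k - 1) * k ^ a + k ^ a := by
    rw [pow_succ', Nat.sub_one_mul, Nat.sub_add_cancel (Nat.le_mul_of_pos_left _ (by omega))]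
  obtain ⟨d, rfl⟩ : ∃ d, b = (k - 1) * k ^ a + d := ⟨b - (k - 1) * k ^ a, by omega⟩
  have hd : d < k ^ a := by omega
  have hsplit : k ^ a + ((k - 1) * k ^ a + d) = k ^ (a + 1) + d := by omega
  have hlt : k ^ (a + 1) + d < k ^ (a + 1 + 1) := by
    have : 2 * k ^ (a + 1) ≤ k ^ (a + 1 + 1) := by
      rw [pow_succ k (a + 1), mul_comm 2]; exact Nat.mul_le_mul_left _ hk
    omega
  have hsucc : enorm k (a + 1) ≤ enorm k a + 3 := by
    have hak : a < k ^ a := Nat.lt_pow_self (by omega)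
    have hdigit : k ^ a ≤ (k - 1) * k ^ a := Nat.le_mul_of_pos_left _ (by omega)
    have := ih a (by omega) 0
    rw [pow_zero, enorm_zero_eq_one, add_comm 1 a] at this
    omega
  rw [hsplit, enorm_pow_add_of_lt hk hlt, enorm_mul_pow_add hk hd (by omega)]
  have : enorm k a + 2 ≤ (k - 1) * (enorm k a + 2) := Nat.le_mul_of_pos_left _ (by omega)
  have := one_le_enorm k a
  omega

lemma enorm_pow_add_le_of_pow_succ_le (hk : 2 ≤ k) (hb : k ^ (a + 1) ≤ b)
    (ih : ∀ c < b, ∀ a, enorm k (k ^ a + c) ≤ enorm k a + enorm k c + 2) :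
    enorm k (k ^ a + b) ≤ enorm k a + enorm k b + 2 := by
  have hb0 : b ≠ 0 := by have := pow_pos (by omega : 0 < k) (a + 1); omega
  set s := Nat.log k b
  have has : a < s := Nat.lt_iff_add_one_le.2 ((Nat.le_log_iff_pow_le (by omega) hb0).2 hb)
  have hpow : k ^ a < k ^ s := Nat.pow_lt_pow_right (by omega) has
  have hsb : k ^ s ≤ b := Nat.pow_log_le_self k hb0
  have hbs : b < k ^ (s + 1) := Nat.lt_pow_succ_log_self (by omega) b
  obtain ⟨c, hc⟩ : ∃ c, b = k ^ s + c := ⟨b - k ^ s, by omega⟩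
  have hb_eq : enorm k b = enorm k s + enorm k c + 2 := hc ▸ enorm_pow_add_of_lt hk (hc ▸ hbs)
  calc enorm k (k ^ a + b) = enorm k (k ^ s + (k ^ a + c)) := by rw [hc, add_left_comm]
    _ ≤ enorm k s + enorm k (k ^ a + c) + 2 := ih _ (by omega) s
    _ ≤ enorm k s + (enorm k a + enorm k c + 2) + 2 := by gcongr; exact ih c (by omega) a
    _ = enorm k a + enorm k b + 2 := by rw [hb_eq]; ring

end InductionStep

/-- Exponential norm minimality lemma: if `m = k^a + b` (arbitrary
decomposition), then `‖m‖_k ≤ ‖a‖_k + ‖b‖_k + 2`. -/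
theorem enorm_pow_add_le (k a b : ℕ) (hk : 2 ≤ k) :
    enorm k (k ^ a + b) ≤ enorm k a + enorm k b + 2 := by
  induction b using Nat.strong_induction_on generalizing a with
  | _ b ih =>
  rcases lt_or_ge (k ^ a + b) (k ^ (a + 1)) with hlt | hcarry
  · exact (enorm_pow_add_of_lt hk hlt).le
  rcases lt_or_ge b (k ^ (a + 1)) with hb | hb
  · exact enorm_pow_add_le_of_carry hk hcarry hb ih
  · exact enorm_pow_add_le_of_pow_succ_le hk hb ih
end

section
/- Base-change maximality inequality for exponentials: fix ℓ > k ≥ 2 and suppose the hereditary exponential base-change is maximal below m (i.e., for every term with value < m, the base-changed term value is at most the base-change of the normal form). If m = k^a + b (arbitrary decomposition), then bch(m,k,ℓ) ≥ ℓ^{bch(a,k,ℓ)} + bch(b,k,ℓ). -/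
/-- Terms of the exponential notation system `E_k`: generated by `0`,
addition, and base-`k` exponentiation `x ↦ k^x`. -/
inductive ETerm : Type
  | zero : ETerm
  | add : ETerm → ETerm → ETerm
  | expBase : ETerm → ETerm

/-- Value of an exponential term at base `k`. -/
def ETerm.val (k : ℕ) : ETerm → ℕ
  | .zero => 0
  | .add s t => s.val k + t.val k
  | .expBase s => k ^ s.val k

/-- Norm (number of symbols) of an exponential term. -/
def ETerm.norm : ETerm → ℕ
  | .zero => 1
  | .add s t => 1 + s.norm + t.norm
  | .expBase s => 1 + s.norm

/-- Exponential base change: replace base `k` by `l` hereditarily in the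
base-`k` normal form `m = k^r + b`, `k^r ≤ m < k^(r+1)`. -/
def ebch (k l m : ℕ) : ℕ :=
  if h : m = 0 ∨ k < 2 then 0
  else l ^ ebch k l (Nat.log k m) + ebch k l (m - k ^ Nat.log k m)
termination_by m
decreasing_by
  · push_neg at h
    exact Nat.log_lt_self k h.1
  · push_neg at h
    exact Nat.sub_lt (Nat.pos_of_ne_zero h.1) (pow_pos (by omega) _)

lemma ebch_zero (k l : ℕ) : ebch k l 0 = 0 := by rw [ebch]; simp

lemma ebch_eq {k : ℕ} (l : ℕ) (hk : 2 ≤ k) {m : ℕ} (hm : m ≠ 0) :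
    ebch k l m = l ^ ebch k l (Nat.log k m) + ebch k l (m - k ^ Nat.log k m) := by
  rw [ebch]; rw [dif_neg]; push_neg; exact ⟨hm, by omega⟩

/-- Digit expansion lemma. -/
lemma ebch_digit {k : ℕ} (l : ℕ) (hk : 2 ≤ k) :
    ∀ d, 1 ≤ d → d < k → ∀ r s, s < k ^ r →
      ebch k l (d * k ^ r + s) = d * l ^ ebch k l r + ebch k l s := by
  intro d
  induction d with
  | zero => omega
  | succ d ih =>
    intro _ hd r s hs
    have hkpos : 0 < k ^ r := pow_pos (by omega) r
    have hn0 : (d + 1) * k ^ r + s ≠ 0 := by nlinarith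
    have hlog : Nat.log k ((d + 1) * k ^ r + s) = r := by
      apply Nat.log_eq_of_pow_le_of_lt_pow
      · nlinarith
      · have : k ^ (r + 1) = k * k ^ r := by ring
        nlinarith
    rw [ebch_eq l hk hn0, hlog]
    have hsub : (d + 1) * k ^ r + s - k ^ r = d * k ^ r + s := by
      have : (d + 1) * k ^ r = d * k ^ r + k ^ r := by ring
      omega
    rw [hsub]
    rcases Nat.eq_zero_or_pos d with h0 | h1
    · subst h0; simp
    · rw [ih h1 (by omega) r s hs]; ring

lemma ebch_pow {k : ℕ} (l : ℕ) (hk : 2 ≤ k) (a : ℕ) :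
    ebch k l (k ^ a) = l ^ ebch k l a := by
  have := ebch_digit l hk 1 le_rfl (by omega) a 0 (pow_pos (by omega) a)
  simpa [ebch_zero] using this

/-- Strict monotonicity of `ebch`, together with the power bound. -/
lemma ebch_mono_bound {k l : ℕ} (hk : 2 ≤ k) (hl : k < l) :
    ∀ c, (∀ b, b < c → ebch k l b < ebch k l c) ∧
      (∀ n, n < k ^ c → ebch k l n < l ^ ebch k l c) := by
  intro c
  induction c using Nat.strong_induction_on with
  | _ c ih =>
  have hlpos : 0 < l := by omega
  have part1 : ∀ b, b < c → ebch k l b < ebch k l c := by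
    intro b hb
    have hc0 : c ≠ 0 := by omega
    set rc := Nat.log k c with hrc
    have hrclt : rc < c := Nat.log_lt_self k hc0
    have hkrc : k ^ rc ≤ c := Nat.pow_log_le_self k hc0
    have hkp : 0 < k ^ rc := pow_pos (by omega) rc
    have hclt : c < k ^ (rc + 1) := Nat.lt_pow_succ_log_self (by omega) c
    rw [ebch_eq l hk hc0, ← hrc]
    rcases Nat.eq_zero_or_pos b with h0 | hbpos
    · subst h0
      rw [ebch_zero]
      have : 0 < l ^ ebch k l rc := pow_pos hlpos _
      omega
    · by_cases hbig : k ^ rc ≤ b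
      · have hblog : Nat.log k b = rc :=
          Nat.log_eq_of_pow_le_of_lt_pow hbig (lt_of_le_of_lt (by omega) hclt)
        rw [ebch_eq l hk (by omega), hblog]
        have h2 := (ih (c - k ^ rc) (by omega)).1 (b - k ^ rc) (by omega)
        exact Nat.add_lt_add_left h2 _
      · have h1 := (ih rc hrclt).2 b (by omega)
        have : 0 ≤ ebch k l (c - k ^ rc) := Nat.zero_le _
        omega
  refine ⟨part1, ?_⟩
  intro n hn
  rcases Nat.eq_zero_or_pos n with h0 | hnpos
  · subst h0; rw [ebch_zero]; exact pow_pos hlpos _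
  · set r := Nat.log k n with hr
    have hrc : r < c := Nat.log_lt_of_lt_pow (by omega) hn
    have hkr : 0 < k ^ r := pow_pos (by omega) r
    set d := n / k ^ r with hd
    set s := n % k ^ r with hs
    have hns : n = d * k ^ r + s := (Nat.div_add_mod' n (k ^ r)).symm
    have hslt : s < k ^ r := Nat.mod_lt _ hkr
    have hd1 : 1 ≤ d := Nat.one_le_div_iff hkr |>.mpr (Nat.pow_log_le_self k (by omega))
    have hdk : d < k := by
      have hnlt : n < k ^ (r + 1) := Nat.lt_pow_succ_log_self (by omega) n
      have hdn : d * k ^ r ≤ n := Nat.div_mul_le_self n _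
      by_contra hge
      push_neg at hge
      have : k * k ^ r ≤ d * k ^ r := Nat.mul_le_mul_right _ hge
      have : k ^ (r + 1) = k * k ^ r := by ring
      nlinarith
    have hdig := ebch_digit l hk d hd1 hdk r s hslt
    rw [hns, hdig]
    have hsb : ebch k l s < l ^ ebch k l r := (ih r hrc).2 s hslt
    have hmono : ebch k l r < ebch k l c := part1 r hrc
    calc d * l ^ ebch k l r + ebch k l s
        < (d + 1) * l ^ ebch k l r := by nlinarith
      _ ≤ l * l ^ ebch k l r := by
          have : d + 1 ≤ l := by omega
          exact Nat.mul_le_mul_right _ this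
      _ = l ^ (ebch k l r + 1) := by ring
      _ ≤ l ^ ebch k l c := Nat.pow_le_pow_right hlpos (by omega)

lemma ebch_mono {k l : ℕ} (hk : 2 ≤ k) (hl : k < l) {b c : ℕ} (h : b < c) :
    ebch k l b < ebch k l c := (ebch_mono_bound hk hl c).1 b h

/-- `ebch` of `k^r - k^a + c` splits additively when `c < k^a`. -/
lemma ebch_pow_sub_add {k l : ℕ} (hk : 2 ≤ k) :
    ∀ r a c, a < r → c < k ^ a →
      ebch k l (k ^ r - k ^ a + c) = ebch k l (k ^ r - k ^ a) + ebch k l c := by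
  intro r
  induction r with
  | zero => omega
  | succ r ih =>
    intro a c har hc
    have hka : 0 < k ^ a := pow_pos (by omega) a
    rcases Nat.lt_or_ge a r with h1 | h2
    · -- k^(r+1) - k^a = (k-1) * k^r + (k^r - k^a)
      have hkr : k ^ a < k ^ r := Nat.pow_lt_pow_right (by omega) h1
      have he : k ^ (r + 1) - k ^ a + c = (k - 1) * k ^ r + (k ^ r - k ^ a + c) := by
        have : k ^ (r + 1) = k * k ^ r := by ring
        have hkk : k * k ^ r = (k - 1) * k ^ r + k ^ r := by
          have : k = (k - 1) + 1 := by omega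
          nlinarith [this]
        omega
      have he2 : k ^ (r + 1) - k ^ a = (k - 1) * k ^ r + (k ^ r - k ^ a) := by omega
      have hlt : k ^ r - k ^ a + c < k ^ r := by omega
      rw [he, ebch_digit l hk (k - 1) (by omega) (by omega) r _ hlt,
        ih a c h1 hc, he2,
        ebch_digit l hk (k - 1) (by omega) (by omega) r _ (by omega)]
      ring
    · -- a = r
      have ha : a = r := by omega
      subst ha
      have he : k ^ (a + 1) - k ^ a = (k - 1) * k ^ a := by
        have : k ^ (a + 1) = k * k ^ a := by ring
        have : k * k ^ a = (k - 1) * k ^ a + k ^ a := by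
          have hh : k = (k - 1) + 1 := by omega
          nlinarith [hh]
        omega
      have hx : ebch k l ((k - 1) * k ^ a) = (k - 1) * l ^ ebch k l a := by
        have h9 := ebch_digit l hk (k - 1) (by omega) (by omega) a 0 hka
        simpa [ebch_zero] using h9
      rw [he, ebch_digit l hk (k - 1) (by omega) (by omega) a c hc, hx]

lemma ebch_pow_sub_le {k l : ℕ} (hk : 2 ≤ k) (hl : k < l) :
    ∀ r a, a < r → ebch k l (k ^ r - k ^ a) + l ^ ebch k l a ≤ l ^ ebch k l r := by
  intro r
  induction r with
  | zero => omega
  | succ r ih =>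
    intro a har
    have hka : 0 < k ^ a := pow_pos (by omega) a
    have hkr : 0 < k ^ r := pow_pos (by omega) r
    have hlp : 0 < l := by omega
    have hmono : ebch k l r + 1 ≤ ebch k l (r + 1) :=
      ebch_mono hk hl (Nat.lt_succ_self r)
    have hstep : ∀ x, x ≤ l ^ ebch k l r → (k - 1) * l ^ ebch k l r + x ≤ l ^ ebch k l (r + 1) := by
      intro x hx
      have h1 : (k - 1) * l ^ ebch k l r + x ≤ k * l ^ ebch k l r := by
        have : (k - 1) * l ^ ebch k l r + l ^ ebch k l r = k * l ^ ebch k l r := by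
          have hh : k - 1 + 1 = k := by omega
          nlinarith [hh]
        omega
      have h2 : k * l ^ ebch k l r ≤ l * l ^ ebch k l r :=
        Nat.mul_le_mul_right _ (by omega)
      have h3 : l * l ^ ebch k l r = l ^ (ebch k l r + 1) := by ring
      have h4 : l ^ (ebch k l r + 1) ≤ l ^ ebch k l (r + 1) :=
        Nat.pow_le_pow_right hlp hmono
      omega
    rcases Nat.lt_or_ge a r with h1 | h2
    · have hkk : k ^ a < k ^ r := Nat.pow_lt_pow_right (by omega) h1
      have he2 : k ^ (r + 1) - k ^ a = (k - 1) * k ^ r + (k ^ r - k ^ a) := by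
        have h5 : k ^ (r + 1) = k * k ^ r := by ring
        have h6 : k * k ^ r = (k - 1) * k ^ r + k ^ r := by
          have hh : k = (k - 1) + 1 := by omega
          nlinarith [hh]
        omega
      rw [he2, ebch_digit l hk (k - 1) (by omega) (by omega) r _ (by omega)]
      have hih := ih a h1
      have := hstep (ebch k l (k ^ r - k ^ a) + l ^ ebch k l a) (by omega)
      omega
    · have ha : a = r := by omega
      subst ha
      have he : k ^ (a + 1) - k ^ a = (k - 1) * k ^ a := by
        have h5 : k ^ (a + 1) = k * k ^ a := by ring
        have h6 : k * k ^ a = (k - 1) * k ^ a + k ^ a := by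
          have hh : k = (k - 1) + 1 := by omega
          nlinarith [hh]
        omega
      have hx : ebch k l ((k - 1) * k ^ a) = (k - 1) * l ^ ebch k l a := by
        have h9 := ebch_digit l hk (k - 1) (by omega) (by omega) a 0 hka
        simpa [ebch_zero] using h9
      rw [he, hx]
      exact hstep _ le_rfl

lemma ebch_key {k l : ℕ} (hk : 2 ≤ k) (hl : k < l) :
    ∀ m a b, m = k ^ a + b → l ^ ebch k l a + ebch k l b ≤ ebch k l m := by
  intro m
  induction m using Nat.strong_induction_on with
  | _ m ih =>
  intro a b hm
  have hka : 0 < k ^ a := pow_pos (by omega) a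
  have hm0 : m ≠ 0 := by omega
  set r := Nat.log k m with hr
  have hkrm : k ^ r ≤ m := Nat.pow_log_le_self k hm0
  have hkr : 0 < k ^ r := pow_pos (by omega) r
  have hmlt : m < k ^ (r + 1) := Nat.lt_pow_succ_log_self (by omega) m
  have har : a ≤ r := by
    have h1 : Nat.log k (k ^ a) ≤ Nat.log k m := Nat.log_mono_right (by omega)
    rwa [Nat.log_pow (by omega)] at h1
  by_cases hb : k ^ r ≤ b
  · have hblog : Nat.log k b = r :=
      Nat.log_eq_of_pow_le_of_lt_pow hb (lt_of_le_of_lt (by omega) hmlt)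
    rw [ebch_eq l hk hm0, ← hr, ebch_eq (m := b) l hk (by omega), hblog]
    have h2 := ih (m - k ^ r) (by omega) a (b - k ^ r) (by omega)
    omega
  · by_cases hab : a = r
    · have hpe : k ^ a = k ^ r := by rw [hab]
      rw [ebch_eq l hk hm0, ← hr, hab]
      have hx : m - k ^ r = b := by omega
      rw [hx]
    · have halt : a < r := lt_of_le_of_ne har hab
      have hkak : k ^ a < k ^ r := Nat.pow_lt_pow_right (by omega) halt
      have hc : b = k ^ r - k ^ a + (m - k ^ r) := by omega
      have hclt : m - k ^ r < k ^ a := by omega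
      rw [ebch_eq l hk hm0, ← hr, hc,
        ebch_pow_sub_add hk r a (m - k ^ r) halt hclt]
      have h3 := ebch_pow_sub_le hk hl r a halt
      omega

/-- Base-change maximality inequality for exponentials: fix `ℓ > k ≥ 2` and
suppose the hereditary exponential base change is maximal below `m`. If
`m = k^a + b` (arbitrary decomposition), then
`bch(m,k,ℓ) ≥ ℓ^(bch(a,k,ℓ)) + bch(b,k,ℓ)`. -/
theorem ebch_pow_add_maximal (k l m a b : ℕ) (hk : 2 ≤ k) (hl : k < l)
    (hmax : ∀ τ : ETerm, τ.val k < m → τ.val l ≤ ebch k l (τ.val k))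
    (hm : m = k ^ a + b) :
    l ^ ebch k l a + ebch k l b ≤ ebch k l m :=
  ebch_key hk hl m a b hm
end

section
/- Every Goodstein walk over the elementary notation system is finite: if (m_i) is a sequence such that for each i with m_i > 0 there exists a term τ_i built from 0, +, ·, and base-(i+2) exponentiation with value m_i, and m_{i+1} equals the value of τ_i with each i+2 replaced by i+3, minus 1, then some m_i = 0. -/
/-!
Read the hereditary base-`k` normal form of `n` in two ways: with `k` replaced by `k + 1` it is
the number `baseChange k n`, with `k` replaced by `ω` an ordinal below `ε₀`. The two readings
agree, in that the ordinal of `baseChange k n` at base `k + 1` is the ordinal of `n` at base `k`.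

The normal form is the most valuable way of writing `n`: a term of value `n` at base `k` has
value at most `baseChange k n` at base `k + 1`, because `baseChange k` is superadditive and
supermultiplicative and sends `k ^ x` to `(k + 1) ^ baseChange k x`. Superadditivity holds because
a carry `k ^ e * k = k ^ (e + 1)` trades `(k + 1) ^ baseChange k e * k` for the larger
`(k + 1) ^ baseChange k (e + 1)`. So a step of a walk, which lowers the base-changed value by one,
strictly lowers the ordinal, and there is no infinite descending sequence of ordinals.
-/

/-- Terms of the elementary notation system `L_k`: generated by `0`,
addition, multiplication, and base-`k` exponentiation `x ↦ k^x`. -/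
inductive LTerm : Type
  | zero : LTerm
  | add : LTerm → LTerm → LTerm
  | mul : LTerm → LTerm → LTerm
  | expBase : LTerm → LTerm

/-- Value of an elementary term at base `k`. -/
def LTerm.val (k : ℕ) : LTerm → ℕ
  | .zero => 0
  | .add s t => s.val k + t.val k
  | .mul s t => s.val k * t.val k
  | .expBase s => k ^ s.val k

namespace Goodstein

open Nat (log)

theorem mod_pow_log_lt_self (k : ℕ) {n : ℕ} (hn : n ≠ 0) : n % k ^ log k n < n := by
  have hpos : 0 < k ^ log k n := by
    rcases k.eq_zero_or_pos with rfl | hk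
    · simp
    · positivity
  exact (Nat.mod_lt _ hpos).trans_le (Nat.pow_log_le_self k hn)

theorem div_pow_log_lt {k : ℕ} (hk : 1 < k) (n : ℕ) : n / k ^ log k n < k := by
  rw [Nat.div_lt_iff_lt_mul (by positivity), ← pow_succ']
  exact Nat.lt_pow_succ_log_self hk n

theorem log_pow_mul_add {k e d r : ℕ} (hd₀ : 0 < d) (hd : d < k) (hr : r < k ^ e) :
    log k (k ^ e * d + r) = e := by
  refine Nat.log_eq_of_pow_le_of_lt_pow (le_add_right (Nat.le_mul_of_pos_right _ hd₀)) ?_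
  calc k ^ e * d + r < k ^ e * (d + 1) := by rw [mul_add_one]; omega
    _ ≤ k ^ (e + 1) := by rw [pow_succ]; gcongr; omega

/-- Folds `node` over the hereditary base-`k` normal form `n = k ^ e * d + r`, where
`e = log k n`, `0 < d < k` and `r < k ^ e`, recursing into the exponent `e` and the rest `r`. -/
def hereditaryFold {α : Type*} [Zero α] (k : ℕ) (node : α → ℕ → α → α) : ℕ → α
  | 0 => 0
  | n + 1 =>
    node (hereditaryFold k node (log k (n + 1))) ((n + 1) / k ^ log k (n + 1))
      (hereditaryFold k node ((n + 1) % k ^ log k (n + 1)))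
decreasing_by
  · exact Nat.log_lt_self k n.succ_ne_zero
  · exact mod_pow_log_lt_self k n.succ_ne_zero

section hereditaryFold

variable {α : Type*} [Zero α] {k : ℕ} {node : α → ℕ → α → α}

@[simp]
theorem hereditaryFold_zero : hereditaryFold k node 0 = 0 := by
  rw [hereditaryFold]

theorem hereditaryFold_of_ne_zero {n : ℕ} (hn : n ≠ 0) :
    hereditaryFold k node n = node (hereditaryFold k node (log k n)) (n / k ^ log k n)
      (hereditaryFold k node (n % k ^ log k n)) := by
  obtain ⟨n, rfl⟩ := Nat.exists_eq_succ_of_ne_zero hn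
  rw [hereditaryFold]

theorem hereditaryFold_pow_mul_add {e d r : ℕ} (hd₀ : 0 < d) (hd : d < k)
    (hr : r < k ^ e) :
    hereditaryFold k node (k ^ e * d + r) =
      node (hereditaryFold k node e) d (hereditaryFold k node r) := by
  have hpos : 0 < k ^ e := pow_pos (hd₀.trans hd) e
  rw [hereditaryFold_of_ne_zero (by positivity), log_pow_mul_add hd₀ hd hr,
    Nat.mul_add_div hpos, Nat.div_eq_of_lt hr, add_zero, Nat.mul_add_mod, Nat.mod_eq_of_lt hr]

end hereditaryFold

/-- The hereditary base change `k ↦ k + 1` (`bch` in the paper). -/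
def baseChange (k : ℕ) : ℕ → ℕ :=
  hereditaryFold k fun x d y => (k + 1) ^ x * d + y

section baseChange

variable {k : ℕ}

@[simp]
theorem baseChange_zero : baseChange k 0 = 0 :=
  hereditaryFold_zero

theorem baseChange_of_ne_zero {n : ℕ} (hn : n ≠ 0) :
    baseChange k n =
      (k + 1) ^ baseChange k (log k n) * (n / k ^ log k n) + baseChange k (n % k ^ log k n) :=
  hereditaryFold_of_ne_zero hn

theorem baseChange_pow_mul_add {e d r : ℕ} (hd : d < k) (hr : r < k ^ e) :
    baseChange k (k ^ e * d + r) = (k + 1) ^ baseChange k e * d + baseChange k r := by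
  rcases d.eq_zero_or_pos with rfl | hd₀
  · simp
  · exact hereditaryFold_pow_mul_add hd₀ hd hr

theorem baseChange_pow (hk : 1 < k) (e : ℕ) :
    baseChange k (k ^ e) = (k + 1) ^ baseChange k e := by
  simpa using baseChange_pow_mul_add hk (pow_pos (zero_lt_one.trans hk) e)

/-- The carry `k ^ e * k = k ^ (e + 1)` can only increase the base-changed value. -/
theorem pow_mul_add_baseChange_le (hk : 1 < k) {e d r : ℕ}
    (hmono : baseChange k e < baseChange k (e + 1)) (hd : d ≤ k) (hr : r < k ^ e) :
    (k + 1) ^ baseChange k e * d + baseChange k r ≤ baseChange k (k ^ e * d + r) := by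
  obtain hd | rfl : d < k ∨ k = d := hd.lt_or_eq.imp_right Eq.symm
  · exact (baseChange_pow_mul_add hd hr).ge
  have hr' : r < k ^ (e + 1) := hr.trans (Nat.pow_lt_pow_right hk e.lt_succ_self)
  calc (k + 1) ^ baseChange k e * k + baseChange k r
      ≤ (k + 1) ^ (baseChange k e + 1) + baseChange k r := by rw [pow_succ]; gcongr; omega
    _ ≤ (k + 1) ^ baseChange k (e + 1) + baseChange k r := by gcongr <;> omega
    _ = baseChange k (k ^ e * k + r) := by
      rw [← pow_succ, ← mul_one (k ^ (e + 1)), baseChange_pow_mul_add hk hr', mul_one]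

theorem baseChange_add_pow_le (hk : 1 < k) (x e : ℕ) :
    baseChange k x + (k + 1) ^ baseChange k e ≤ baseChange k (x + k ^ e) := by
  induction x using Nat.strong_induction_on generalizing e with
  | _ x ih =>
  rcases lt_or_ge x (k ^ e) with hx | hx
  · rw [add_comm x, ← mul_one (k ^ e), baseChange_pow_mul_add hk hx, mul_one, add_comm]
  have hx₀ : x ≠ 0 := ((pow_pos (zero_lt_one.trans hk) e).trans_le hx).ne'
  set E := log k x
  set D := x / k ^ E
  set R := x % k ^ E
  have hD : D < k := div_pow_log_lt hk x
  have hR : R < k ^ E := Nat.mod_lt _ (by positivity)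
  have hx' : x = k ^ E * D + R := (Nat.div_add_mod x _).symm
  have hke : k ^ e ≤ k ^ E := Nat.pow_le_pow_right (by omega) (Nat.le_log_of_pow_le hk hx)
  have hmono : baseChange k E < baseChange k (E + 1) := by
    simpa using ih E (Nat.log_lt_self k hx₀) 0
  have hrec := ih R (mod_pow_log_lt_self k hx₀) e
  rw [baseChange_of_ne_zero hx₀, add_assoc]
  rcases lt_or_ge (R + k ^ e) (k ^ E) with hsum | hsum
  · calc (k + 1) ^ baseChange k E * D + (baseChange k R + (k + 1) ^ baseChange k e)
        ≤ (k + 1) ^ baseChange k E * D + baseChange k (R + k ^ e) := by gcongr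
      _ = baseChange k (x + k ^ e) := by rw [← baseChange_pow_mul_add hD hsum, hx', add_assoc]
  · set R' := R + k ^ e - k ^ E
    have hR' : R' < k ^ E := by omega
    have hsplit : R + k ^ e = k ^ E * 1 + R' := by omega
    calc (k + 1) ^ baseChange k E * D + (baseChange k R + (k + 1) ^ baseChange k e)
        ≤ (k + 1) ^ baseChange k E * D + baseChange k (R + k ^ e) := by gcongr
      _ = (k + 1) ^ baseChange k E * (D + 1) + baseChange k R' := by
        rw [hsplit, baseChange_pow_mul_add hk hR']; ring
      _ ≤ baseChange k (k ^ E * (D + 1) + R') := pow_mul_add_baseChange_le hk hmono hD hR'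
      _ = baseChange k (x + k ^ e) := by congr 1; rw [mul_add_one]; omega

theorem baseChange_strictMono (hk : 1 < k) : StrictMono (baseChange k) :=
  strictMono_nat_of_lt_succ fun n => by simpa using baseChange_add_pow_le hk n 0

theorem baseChange_add_pow_mul_le (hk : 1 < k) (x e d : ℕ) :
    baseChange k x + (k + 1) ^ baseChange k e * d ≤ baseChange k (x + k ^ e * d) := by
  induction d with
  | zero => simp
  | succ d ih =>
    calc baseChange k x + (k + 1) ^ baseChange k e * (d + 1)
        = baseChange k x + (k + 1) ^ baseChange k e * d + (k + 1) ^ baseChange k e := by ring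
      _ ≤ baseChange k (x + k ^ e * d) + (k + 1) ^ baseChange k e := by gcongr
      _ ≤ baseChange k (x + k ^ e * (d + 1)) := by
        rw [mul_add_one, ← add_assoc]; exact baseChange_add_pow_le hk _ e

theorem baseChange_add_baseChange_le (hk : 1 < k) (a b : ℕ) :
    baseChange k a + baseChange k b ≤ baseChange k (a + b) := by
  induction b using Nat.strong_induction_on with
  | _ b ih =>
  rcases eq_or_ne b 0 with rfl | hb
  · simp
  set e := log k b
  calc baseChange k a + baseChange k b
      = baseChange k a + baseChange k (b % k ^ e) + (k + 1) ^ baseChange k e * (b / k ^ e) := by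
        rw [baseChange_of_ne_zero hb]; ring
    _ ≤ baseChange k (a + b % k ^ e) + (k + 1) ^ baseChange k e * (b / k ^ e) := by
        gcongr; exact ih _ (mod_pow_log_lt_self k hb)
    _ ≤ baseChange k (a + b % k ^ e + k ^ e * (b / k ^ e)) := baseChange_add_pow_mul_le hk _ _ _
    _ = baseChange k (a + b) := by rw [add_assoc, Nat.mod_add_div]

theorem mul_baseChange_le (hk : 1 < k) (d b : ℕ) :
    d * baseChange k b ≤ baseChange k (d * b) := by
  induction d with
  | zero => simp
  | succ d ih =>
    calc (d + 1) * baseChange k b = d * baseChange k b + baseChange k b := by ring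
      _ ≤ baseChange k (d * b) + baseChange k b := by gcongr
      _ ≤ baseChange k ((d + 1) * b) := by
        rw [add_one_mul]; exact baseChange_add_baseChange_le hk _ _

theorem pow_mul_baseChange_le (hk : 1 < k) (e m : ℕ) :
    (k + 1) ^ baseChange k e * baseChange k m ≤ baseChange k (k ^ e * m) := by
  induction m using Nat.strong_induction_on with
  | _ m ih =>
  rcases eq_or_ne m 0 with rfl | hm
  · simp
  set f := log k m
  calc (k + 1) ^ baseChange k e * baseChange k m
      = (k + 1) ^ baseChange k e * baseChange k (m % k ^ f)
        + (k + 1) ^ (baseChange k e + baseChange k f) * (m / k ^ f) := by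
        rw [baseChange_of_ne_zero hm, pow_add]; ring
    _ ≤ baseChange k (k ^ e * (m % k ^ f)) + (k + 1) ^ baseChange k (e + f) * (m / k ^ f) := by
        gcongr
        · exact ih _ (mod_pow_log_lt_self k hm)
        · omega
        · exact baseChange_add_baseChange_le hk e f
    _ ≤ baseChange k (k ^ e * (m % k ^ f) + k ^ (e + f) * (m / k ^ f)) :=
        baseChange_add_pow_mul_le hk _ _ _
    _ = baseChange k (k ^ e * m) := by rw [pow_add, mul_assoc, ← mul_add, Nat.mod_add_div]

theorem baseChange_mul_baseChange_le (hk : 1 < k) (a b : ℕ) :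
    baseChange k a * baseChange k b ≤ baseChange k (a * b) := by
  induction a using Nat.strong_induction_on with
  | _ a ih =>
  rcases eq_or_ne a 0 with rfl | ha
  · simp
  set e := log k a
  calc baseChange k a * baseChange k b
      = baseChange k (a % k ^ e) * baseChange k b
        + (k + 1) ^ baseChange k e * ((a / k ^ e) * baseChange k b) := by
        rw [baseChange_of_ne_zero ha]; ring
    _ ≤ baseChange k (a % k ^ e * b)
        + (k + 1) ^ baseChange k e * baseChange k (a / k ^ e * b) := by
        gcongr
        · exact ih _ (mod_pow_log_lt_self k ha)
        · exact mul_baseChange_le hk _ _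
    _ ≤ baseChange k (a % k ^ e * b) + baseChange k (k ^ e * (a / k ^ e * b)) := by
        gcongr; exact pow_mul_baseChange_le hk _ _
    _ ≤ baseChange k (a % k ^ e * b + k ^ e * (a / k ^ e * b)) :=
        baseChange_add_baseChange_le hk _ _
    _ = baseChange k (a * b) := by rw [← mul_assoc, ← add_mul, Nat.mod_add_div]

end baseChange

theorem val_succ_le_baseChange {k : ℕ} (hk : 1 < k) (τ : LTerm) :
    τ.val (k + 1) ≤ baseChange k (τ.val k) := by
  induction τ with
  | zero => simp [LTerm.val]
  | add s t ihs iht => exact (add_le_add ihs iht).trans (baseChange_add_baseChange_le hk _ _)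
  | mul s t ihs iht => exact (mul_le_mul' ihs iht).trans (baseChange_mul_baseChange_le hk _ _)
  | expBase s ih =>
    rw [LTerm.val, LTerm.val, baseChange_pow hk]
    exact Nat.pow_le_pow_right k.succ_pos ih

open scoped Ordinal

noncomputable def toOrdinal (k : ℕ) : ℕ → Ordinal.{0} :=
  hereditaryFold k fun x d y => ω ^ x * d + y

section toOrdinal

variable {k : ℕ}

@[simp]
theorem toOrdinal_zero : toOrdinal k 0 = 0 :=
  hereditaryFold_zero

theorem toOrdinal_of_ne_zero {n : ℕ} (hn : n ≠ 0) :
    toOrdinal k n = ω ^ toOrdinal k (log k n) * (n / k ^ log k n : ℕ)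
      + toOrdinal k (n % k ^ log k n) :=
  hereditaryFold_of_ne_zero hn

theorem toOrdinal_pow_mul_add {e d r : ℕ} (hd : d < k) (hr : r < k ^ e) :
    toOrdinal k (k ^ e * d + r) = ω ^ toOrdinal k e * d + toOrdinal k r := by
  rcases d.eq_zero_or_pos with rfl | hd₀
  · simp
  · exact hereditaryFold_pow_mul_add hd₀ hd hr

theorem toOrdinal_lt_opow_mul {e : ℕ} (hbound : ∀ r < k ^ e, toOrdinal k r < ω ^ toOrdinal k e)
    {d n : ℕ} (hd : d ≤ k) (hn : n < k ^ e * d) : toOrdinal k n < ω ^ toOrdinal k e * d := by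
  induction d generalizing n with
  | zero => simp at hn
  | succ d ih =>
    rcases lt_or_ge n (k ^ e * d) with h | h
    · calc toOrdinal k n < ω ^ toOrdinal k e * d := ih (by omega) h
        _ ≤ ω ^ toOrdinal k e * (d + 1 : ℕ) := by gcongr; omega
    · obtain ⟨r, rfl⟩ := Nat.exists_eq_add_of_le h
      have hr : r < k ^ e := by rw [mul_add_one] at hn; omega
      rw [toOrdinal_pow_mul_add (by omega) hr, Nat.cast_succ, mul_add_one]
      gcongr
      exact hbound r hr

theorem toOrdinal_lt_opow (hk : 1 < k) {e n : ℕ} (hmono : StrictMonoOn (toOrdinal k) (Set.Iic e))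
    (hn : n < k ^ e) : toOrdinal k n < ω ^ toOrdinal k e := by
  induction e using Nat.strong_induction_on generalizing n with
  | _ e ih =>
  rcases eq_or_ne n 0 with rfl | hn₀
  · simpa using Ordinal.opow_pos (toOrdinal k e) Ordinal.omega0_pos
  set E := log k n
  have hE : E < e := Nat.log_lt_of_lt_pow hn₀ hn
  have hbound : ∀ r < k ^ E, toOrdinal k r < ω ^ toOrdinal k E := fun r hr =>
    ih E hE (hmono.mono (Set.Iic_subset_Iic.2 hE.le)) hr
  calc toOrdinal k n < ω ^ toOrdinal k E * k := by
        refine toOrdinal_lt_opow_mul hbound le_rfl ?_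
        rw [← pow_succ]; exact Nat.lt_pow_succ_log_self hk n
    _ < ω ^ toOrdinal k E * ω := by
        gcongr
        · exact Ordinal.opow_pos _ Ordinal.omega0_pos
        · exact Ordinal.natCast_lt_omega0 k
    _ = ω ^ Order.succ (toOrdinal k E) := (Ordinal.opow_succ _ _).symm
    _ ≤ ω ^ toOrdinal k e := Ordinal.opow_le_opow_right Ordinal.omega0_pos
        (Order.succ_le_of_lt (hmono (Set.mem_Iic.2 hE.le) (Set.mem_Iic.2 le_rfl) hE))

theorem toOrdinal_strictMono (hk : 1 < k) : StrictMono (toOrdinal k) := by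
  intro a b hab
  induction b using Nat.strong_induction_on generalizing a with
  | _ b ih =>
  have hb : b ≠ 0 := by omega
  set E := log k b
  have hbound : ∀ r < k ^ E, toOrdinal k r < ω ^ toOrdinal k E := fun r hr =>
    toOrdinal_lt_opow hk (fun x _ y hy hxy => ih y (hy.trans_lt (Nat.log_lt_self k hb)) hxy) hr
  have hD := div_pow_log_lt hk b
  rw [toOrdinal_of_ne_zero hb]
  rcases lt_or_ge a (k ^ E * (b / k ^ E)) with ha | ha
  · exact (toOrdinal_lt_opow_mul hbound hD.le ha).trans_le le_self_add
  · obtain ⟨r, rfl⟩ := Nat.exists_eq_add_of_le ha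
    have hr : r < b % k ^ E := by have := Nat.div_add_mod b (k ^ E); omega
    rw [toOrdinal_pow_mul_add hD (hr.trans (Nat.mod_lt _ (by positivity)))]
    gcongr
    exact ih _ (mod_pow_log_lt_self k hb) hr

theorem toOrdinal_succ_baseChange (hk : 1 < k) (n : ℕ) :
    toOrdinal (k + 1) (baseChange k n) = toOrdinal k n := by
  induction n using Nat.strong_induction_on with
  | _ n ih =>
  rcases eq_or_ne n 0 with rfl | hn
  · simp
  have hR : baseChange k (n % k ^ log k n) < (k + 1) ^ baseChange k (log k n) := by
    rw [← baseChange_pow hk]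
    exact baseChange_strictMono hk (Nat.mod_lt _ (by positivity))
  rw [baseChange_of_ne_zero hn,
    toOrdinal_pow_mul_add ((div_pow_log_lt hk n).trans k.lt_succ_self) hR,
    ih _ (Nat.log_lt_self k hn), ih _ (mod_pow_log_lt_self k hn), toOrdinal_of_ne_zero hn]

end toOrdinal

theorem toOrdinal_succ_lt_of_lt_val {k n : ℕ} (hk : 1 < k) (τ : LTerm)
    (hn : n < τ.val (k + 1)) :
    toOrdinal (k + 1) n < toOrdinal k (τ.val k) := by
  rw [← toOrdinal_succ_baseChange hk]
  exact toOrdinal_strictMono (by omega) (hn.trans_le (val_succ_le_baseChange hk τ))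

end Goodstein

/-- Every Goodstein walk over the elementary notation system is finite: if
for each `i` with `m i > 0` there is a term `τ` over base `i+2` with value
`m i` such that `m (i+1)` is the value of `τ` at base `i+3`, minus `1`, then
some `m i = 0`. -/
theorem goodstein_walk_finite (m : ℕ → ℕ)
    (hwalk : ∀ i : ℕ, 0 < m i →
      ∃ τ : LTerm, τ.val (i + 2) = m i ∧ m (i + 1) = τ.val (i + 3) - 1) :
    ∃ i : ℕ, m i = 0 := by
  by_contra! hm
  obtain ⟨i, hi⟩ :=
    WellFounded.not_rel_apply_succ (r := (· < ·)) fun i => Goodstein.toOrdinal (i + 2) (m i)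
  obtain ⟨τ, hτ, hnext⟩ := hwalk i (Nat.pos_of_ne_zero (hm i))
  have hlt : m (i + 1) < τ.val (i + 3) := by have := hm (i + 1); omega
  exact hi (hτ ▸ Goodstein.toOrdinal_succ_lt_of_lt_val (by omega) τ hlt)
end
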